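/- Let X(τ) be a random walk on a finite state space V where states of S are absorbing. For fixed initial state i and time horizon τ, the survival probability h(S) = Pr(X(τ) ∉ S | X(0) = i) is supermodular as a function of the absorbing set S. -/
import Mathlib


open Finset

/-- Probability that a random walk with one-step transition matrix `P`, started at `i`,
avoids the set `S` at every step up to time `τ`.  (When every state of `S` is absorbing,
this equals the survival probability `Pr(X(τ) ∉ S | X(0) = i)`.) -/
noncomputable def survivalProb {V : Type*} [DecidableEq V] [Fintype V]
    (P : V → V → ℝ) (τ : ℕ) (i : V) (S : Finset V) : ℝ :=
  ∑ p ∈ Finset.univ.filter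
      (fun p : Fin (τ + 1) → V =>
        p 0 = i ∧ ∀ r : Fin (τ + 1), p r ∉ S),
    ∏ r : Fin τ, P (p r.castSucc) (p r.succ)

/-- the survival probability `h(S) = Pr(X(τ) ∉ S | X(0) = i)` of a random
walk with absorbing set `S` is supermodular as a function of `S`. -/
theorem survivalProb_supermodular {V : Type*} [DecidableEq V] [Fintype V]
    (P : V → V → ℝ) (hP_nonneg : ∀ a b, 0 ≤ P a b)
    (hP_stoch : ∀ a, ∑ b, P a b = 1)
    (τ : ℕ) (i : V) :
    ∀ S T : Finset V, S ⊆ T → ∀ u ∉ T,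
      survivalProb P τ i S - survivalProb P τ i (insert u S) ≥
      survivalProb P τ i T - survivalProb P τ i (insert u T) := by
  classical
  intro S T hST u hu
  set f : (Fin (τ + 1) → V) → ℝ :=
    fun p => ∏ r : Fin τ, P (p r.castSucc) (p r.succ) with hf
  have hfnn : ∀ p, 0 ≤ f p := fun p =>
    Finset.prod_nonneg fun r _ => hP_nonneg _ _
  have key : ∀ U : Finset V,
      survivalProb P τ i U - survivalProb P τ i (insert u U) =
      ∑ p ∈ Finset.univ.filter (fun p : Fin (τ + 1) → V =>
          (p 0 = i ∧ ∀ r : Fin (τ + 1), p r ∉ U) ∧ ¬ (∀ r : Fin (τ + 1), p r ≠ u)),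
        f p := by
    intro U
    have h1 : (Finset.univ.filter (fun p : Fin (τ + 1) → V =>
        p 0 = i ∧ ∀ r : Fin (τ + 1), p r ∉ insert u U)) =
        (Finset.univ.filter (fun p : Fin (τ + 1) → V =>
          p 0 = i ∧ ∀ r : Fin (τ + 1), p r ∉ U)).filter
          (fun p => ∀ r : Fin (τ + 1), p r ≠ u) := by
      rw [Finset.filter_filter]
      ext p
      simp only [Finset.mem_filter, Finset.mem_insert, not_or]
      constructor
      · rintro ⟨hu', h0, h⟩
        exact ⟨hu', ⟨h0, fun r => (h r).2⟩, fun r => (h r).1⟩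
      · rintro ⟨hu', ⟨h0, h⟩, h'⟩
        exact ⟨hu', h0, fun r => ⟨h' r, h r⟩⟩
    have h2 := Finset.sum_filter_add_sum_filter_not
      (Finset.univ.filter (fun p : Fin (τ + 1) → V =>
        p 0 = i ∧ ∀ r : Fin (τ + 1), p r ∉ U))
      (fun p => ∀ r : Fin (τ + 1), p r ≠ u) f
    have h3 : (Finset.univ.filter (fun p : Fin (τ + 1) → V =>
        p 0 = i ∧ ∀ r : Fin (τ + 1), p r ∉ U)).filter
        (fun p => ¬ ∀ r : Fin (τ + 1), p r ≠ u) =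
        Finset.univ.filter (fun p : Fin (τ + 1) → V =>
          (p 0 = i ∧ ∀ r : Fin (τ + 1), p r ∉ U) ∧ ¬ (∀ r : Fin (τ + 1), p r ≠ u)) := by
      rw [Finset.filter_filter]
    unfold survivalProb
    rw [h1, ← h3]
    linarith [h2]
  rw [key S, key T]
  apply Finset.sum_le_sum_of_subset_of_nonneg
  · intro p hp
    simp only [Finset.mem_filter] at hp ⊢
    exact ⟨hp.1, ⟨⟨hp.2.1.1, fun r hr => hp.2.1.2 r (hST hr)⟩, hp.2.2⟩⟩
  · intro p _ _
    exact hfnn p
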